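/- arXiv:2203.02835 — 6 statements merged into one kernel-verified Lean document; each statement's English description precedes it below -/
import Mathlib

section
/- Let x_0, …, x_n ∈ ℝ^n be affinely independent with simplex σ = co({x_j}_{j=0}^n). Let g : ℝ^n → ℝ be twice continuously differentiable on an open set containing σ, and let β ≥ 0 satisfy |∂²g/∂x^{(q)}∂x^{(r)}(ξ)| ≤ β for all ξ ∈ σ and all q, r ∈ {1, …, n}. Then for every point x = Σ_{j=0}^n α_j x_j of σ with barycentric coordinates α_j ≥ 0, Σ_j α_j = 1, one has |g(x) − Σ_{j=0}^n α_j g(x_j)| ≤ β · Σ_{j=0}^n α_j c_j. -/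
open Filter Topology Set
open scoped BigOperators

/-- Second partial derivative `∂²φ/∂x^{(q)}∂x^{(r)}` of a scalar function on ℝⁿ. -/
noncomputable def secondPartial {n : ℕ} (φ : EuclideanSpace ℝ (Fin n) → ℝ) (q r : Fin n)
    (ξ : EuclideanSpace ℝ (Fin n)) : ℝ :=
  fderiv ℝ (fun y => fderiv ℝ φ y (EuclideanSpace.single r 1)) ξ (EuclideanSpace.single q 1)

/-! Taylor-expand `g` at `x₀` to second order along segments of `σ`: entrywise Hessian bounds
give `|H v v| ≤ β n ‖v‖²` (Cauchy–Schwarz on `∑ |vᵢ|`), so the first-order remainder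
`R y = g y - g x₀ - Dg(x₀)(y - x₀)` satisfies `|R y| ≤ (β n / 2) ‖y - x₀‖²`.
The affine part of `g` is interpolated exactly, so the error equals `R x - ∑ αⱼ R xⱼ`, and
`‖x - x₀‖² ≤ (∑ αⱼ ‖xⱼ - x₀‖) · maxₖ ‖xₖ - x₀‖`. -/

section Taylor

variable {E F : Type*} [NormedAddCommGroup E] [NormedSpace ℝ E]
  [NormedAddCommGroup F] [NormedSpace ℝ F]

theorem norm_sub_sub_deriv_le_of_norm_deriv_sub_le {f f' : ℝ → F} {C : ℝ}
    (hf : ∀ t ∈ Icc (0 : ℝ) 1, HasDerivAt f (f' t) t)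
    (hf' : ∀ t ∈ Icc (0 : ℝ) 1, ‖f' t - f' 0‖ ≤ C * t) :
    ‖f 1 - f 0 - f' 0‖ ≤ C / 2 := by
  have hF : ∀ t ∈ Icc (0 : ℝ) 1,
      HasDerivAt (fun t => f t - f 0 - t • f' 0) (f' t - f' 0) t := fun t ht => by
    have := ((hf t ht).sub_const (f 0)).sub ((hasDerivAt_id' t).smul_const (f' 0))
    rwa [one_smul] at this
  have hB : ∀ t : ℝ, HasDerivAt (fun t => C * t ^ 2 / 2) (C * t) t := fun t => by
    simpa [mul_div_assoc] using ((hasDerivAt_pow 2 t).const_mul C).div_const 2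
  have := image_norm_le_of_norm_deriv_right_le_deriv_boundary
    (fun t ht => (hF t ht).continuousAt.continuousWithinAt)
    (fun t ht => (hF t (Ico_subset_Icc_self ht)).hasDerivWithinAt) (by simp) hB
    (fun t ht => hf' t (Ico_subset_Icc_self ht)) (right_mem_Icc.2 zero_le_one)
  simpa using this

theorem Convex.norm_sub_sub_fderiv_le {f : E → F} {f' : E → E →L[ℝ] F}
    {f'' : E → E →L[ℝ] E →L[ℝ] F} {s : Set E} {K : ℝ} (hs : Convex ℝ s)
    (hf : ∀ z ∈ s, HasFDerivAt f (f' z) z) (hf' : ∀ z ∈ s, HasFDerivAt f' (f'' z) z)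
    (hK : ∀ z ∈ s, ∀ v, ‖f'' z v v‖ ≤ K * ‖v‖ ^ 2) {a b : E} (ha : a ∈ s) (hb : b ∈ s) :
    ‖f b - f a - f' a (b - a)‖ ≤ K / 2 * ‖b - a‖ ^ 2 := by
  set v := b - a
  set p : ℝ → E := fun t => a + t • v
  have hp : ∀ t, HasDerivAt p v t := fun t => by
    convert ((hasDerivAt_id' t).smul_const v).const_add a using 1
    rw [one_smul]
  have hps : ∀ t ∈ Icc (0 : ℝ) 1, p t ∈ s := fun t ht => by
    have : p t = (1 - t) • a + t • b := by simp only [p, v]; module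
    rw [this]
    exact hs ha hb (by linarith [ht.2]) ht.1 (by ring)
  have hDf : ∀ t ∈ Icc (0 : ℝ) 1, HasDerivAt (fun t => f' (p t) v) (f'' (p t) v v) t :=
    fun t ht => by
      simpa using ((hf' _ (hps t ht)).comp_hasDerivAt t (hp t)).clm_apply (hasDerivAt_const t v)
  have hlip : ∀ t ∈ Icc (0 : ℝ) 1, ‖f' (p t) v - f' (p 0) v‖ ≤ K * ‖v‖ ^ 2 * t := by
    intro t ht
    simpa [abs_of_nonneg ht.1] using
      (convex_Icc (0 : ℝ) 1).norm_image_sub_le_of_norm_hasDerivWithin_le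
        (fun t ht => (hDf t ht).hasDerivWithinAt) (fun t ht => hK _ (hps t ht) v)
        (left_mem_Icc.2 zero_le_one) ht
  have := norm_sub_sub_deriv_le_of_norm_deriv_sub_le
    (fun t ht => (hf _ (hps t ht)).comp_hasDerivAt t (hp t)) hlip
  simp only [Function.comp_apply, p, v, zero_smul, add_zero, one_smul, add_sub_cancel] at this
  linarith

end Taylor

theorem EuclideanSpace.abs_apply_self_le_of_abs_apply_single_le {ι : Type*} [Fintype ι]
    [DecidableEq ι] (B : EuclideanSpace ℝ ι →L[ℝ] EuclideanSpace ℝ ι →L[ℝ] ℝ) {β : ℝ}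
    (hβ0 : 0 ≤ β) (hβ : ∀ q r, |B (single q 1) (single r 1)| ≤ β) (v : EuclideanSpace ℝ ι) :
    |B v v| ≤ β * Fintype.card ι * ‖v‖ ^ 2 := by
  have hexp : B v v = ∑ q, ∑ r, v q * v r * B (single q 1) (single r 1) := by
    conv_lhs => rw [← (basisFun ι ℝ).sum_repr v]
    simp only [map_sum, map_smul, FunLike.coe_sum, FunLike.coe_smul, Finset.sum_apply,
      Pi.smul_apply, smul_eq_mul, basisFun_repr, basisFun_apply, Finset.mul_sum]
    rw [Finset.sum_comm]
    exact Finset.sum_congr rfl fun _ _ => Finset.sum_congr rfl fun _ _ => by ring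
  calc |B v v| ≤ ∑ q, ∑ r, |v q| * |v r| * β := by
        rw [hexp]
        refine (Finset.abs_sum_le_sum_abs _ _).trans (Finset.sum_le_sum fun q _ => ?_)
        refine (Finset.abs_sum_le_sum_abs _ _).trans (Finset.sum_le_sum fun r _ => ?_)
        rw [abs_mul, abs_mul]
        exact mul_le_mul_of_nonneg_left (hβ q r) (by positivity)
    _ = β * (∑ q, |v q|) ^ 2 := by
        rw [sq, Finset.sum_mul_sum, Finset.mul_sum]
        simp only [Finset.mul_sum]
        exact Finset.sum_congr rfl fun _ _ => Finset.sum_congr rfl fun _ _ => by ring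
    _ ≤ β * (Fintype.card ι * ∑ q, |v q| ^ 2) := by
        gcongr
        simpa using sq_sum_le_card_mul_sum_sq (s := Finset.univ) (f := fun q => |v q|)
    _ = β * Fintype.card ι * ‖v‖ ^ 2 := by
        rw [EuclideanSpace.norm_sq_eq]
        simp only [Real.norm_eq_abs]
        ring

theorem secondPartial_eq_fderiv_fderiv_apply {n : ℕ} {φ : EuclideanSpace ℝ (Fin n) → ℝ}
    {ξ : EuclideanSpace ℝ (Fin n)} (h : DifferentiableAt ℝ (fderiv ℝ φ) ξ) (q r : Fin n) :
    secondPartial φ q r ξ =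
      fderiv ℝ (fderiv ℝ φ) ξ (EuclideanSpace.single q 1) (EuclideanSpace.single r 1) := by
  rw [secondPartial, fderiv_clm_apply h (differentiableAt_const _)]
  simp

section Interpolation

variable {ι E : Type*} [NormedAddCommGroup E] [NormedSpace ℝ E] {s : Finset ι} {α : ι → ℝ}
  {x : ι → E} {a : E}

theorem sum_smul_sub_eq_sum_smul_sub (hα1 : ∑ i ∈ s, α i = 1) :
    ∑ i ∈ s, α i • x i - a = ∑ i ∈ s, α i • (x i - a) := by
  simp only [smul_sub, Finset.sum_sub_distrib, ← Finset.sum_smul, hα1, one_smul]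

theorem norm_sum_smul_sub_sq_le {m : ℝ} (hα0 : ∀ i ∈ s, 0 ≤ α i) (hα1 : ∑ i ∈ s, α i = 1)
    (hm : ∀ i ∈ s, ‖x i - a‖ ≤ m) :
    ‖∑ i ∈ s, α i • x i - a‖ ^ 2 ≤ (∑ i ∈ s, α i * ‖x i - a‖) * m := by
  have hle : ‖∑ i ∈ s, α i • x i - a‖ ≤ ∑ i ∈ s, α i * ‖x i - a‖ := by
    rw [sum_smul_sub_eq_sum_smul_sub hα1]
    refine (norm_sum_le _ _).trans (Finset.sum_le_sum fun i hi => ?_)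
    rw [norm_smul, Real.norm_of_nonneg (hα0 i hi)]
  have hlem : ∑ i ∈ s, α i * ‖x i - a‖ ≤ m := by
    calc ∑ i ∈ s, α i * ‖x i - a‖ ≤ ∑ i ∈ s, α i * m :=
          Finset.sum_le_sum fun i hi => mul_le_mul_of_nonneg_left (hm i hi) (hα0 i hi)
      _ = m := by rw [← Finset.sum_mul, hα1, one_mul]
  calc ‖∑ i ∈ s, α i • x i - a‖ ^ 2 ≤ (∑ i ∈ s, α i * ‖x i - a‖) ^ 2 := by gcongr
    _ ≤ (∑ i ∈ s, α i * ‖x i - a‖) * m := by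
        rw [sq]
        exact mul_le_mul_of_nonneg_left hlem ((norm_nonneg _).trans hle)

theorem abs_apply_sum_smul_sub_sum_mul_le {f : E → ℝ} {L : E →L[ℝ] ℝ} {K : ℝ} {S : Set E}
    (hS : Convex ℝ S) (hf : ∀ y ∈ S, |f y - f a - L (y - a)| ≤ K * ‖y - a‖ ^ 2)
    (hα0 : ∀ i ∈ s, 0 ≤ α i) (hα1 : ∑ i ∈ s, α i = 1) (hx : ∀ i ∈ s, x i ∈ S) :
    |f (∑ i ∈ s, α i • x i) - ∑ i ∈ s, α i * f (x i)| ≤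
      K * (‖∑ i ∈ s, α i • x i - a‖ ^ 2 + ∑ i ∈ s, α i * ‖x i - a‖ ^ 2) := by
  set R : E → ℝ := fun y => f y - f a - L (y - a)
  have hsplit : f (∑ i ∈ s, α i • x i) - ∑ i ∈ s, α i * f (x i) =
      R (∑ i ∈ s, α i • x i) - ∑ i ∈ s, α i * R (x i) := by
    simp only [R, sum_smul_sub_eq_sum_smul_sub hα1, map_sum, map_smul, smul_eq_mul, mul_sub,
      Finset.sum_sub_distrib, ← Finset.sum_mul, hα1, one_mul]
    ring
  have hsum : |∑ i ∈ s, α i * R (x i)| ≤ K * ∑ i ∈ s, α i * ‖x i - a‖ ^ 2 := by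
    rw [Finset.mul_sum]
    refine (Finset.abs_sum_le_sum_abs _ _).trans (Finset.sum_le_sum fun i hi => ?_)
    rw [abs_mul, abs_of_nonneg (hα0 i hi), mul_left_comm]
    exact mul_le_mul_of_nonneg_left (hf _ (hx i hi)) (hα0 i hi)
  rw [hsplit, mul_add]
  exact (abs_sub _ _).trans (add_le_add (hf _ (hS.sum_mem hα0 hα1 hx)) hsum)

end Interpolation

theorem stmt0_general (n : ℕ)
    (x : Fin (n + 1) → EuclideanSpace ℝ (Fin n))
    (g : EuclideanSpace ℝ (Fin n) → ℝ)
    -- g is C² on an open set containing the simplex σ = co({x_j})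
    (U : Set (EuclideanSpace ℝ (Fin n))) (hU : IsOpen U)
    (hσU : convexHull ℝ (Set.range x) ⊆ U)
    (hg : ContDiffOn ℝ 2 g U)
    (β : ℝ) (hβ0 : 0 ≤ β)
    (hβ : ∀ ξ ∈ convexHull ℝ (Set.range x), ∀ q r : Fin n, |secondPartial g q r ξ| ≤ β)
    (c : Fin (n + 1) → ℝ)
    (hc : ∀ j, c j = ((n : ℝ) / 2) * ‖x j - x 0‖ *
      ((⨆ k : Fin n, ‖x k.succ - x 0‖) + ‖x j - x 0‖))
    (α : Fin (n + 1) → ℝ) (hα0 : ∀ j, 0 ≤ α j) (hα1 : ∑ j, α j = 1) :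
    |g (∑ j, α j • x j) - ∑ j, α j * g (x j)| ≤ β * ∑ j, α j * c j := by
  set σ := convexHull ℝ (Set.range x)
  have hxσ : ∀ j, x j ∈ σ := fun j => subset_convexHull ℝ _ ⟨j, rfl⟩
  have hDg : ∀ z ∈ U, HasFDerivAt g (fderiv ℝ g z) z := fun z hz =>
    ((hg.contDiffAt (hU.mem_nhds hz)).differentiableAt two_ne_zero).hasFDerivAt
  have hD2g : ∀ z ∈ U, HasFDerivAt (fderiv ℝ g) (fderiv ℝ (fderiv ℝ g) z) z := fun z hz =>
    (((hg.fderiv_of_isOpen hU one_add_one_eq_two.le).contDiffAt (hU.mem_nhds hz)).differentiableAt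
      one_ne_zero).hasFDerivAt
  have hHess : ∀ z ∈ σ, ∀ v, ‖fderiv ℝ (fderiv ℝ g) z v v‖ ≤ β * n * ‖v‖ ^ 2 := fun z hz v => by
    simpa using EuclideanSpace.abs_apply_self_le_of_abs_apply_single_le _ hβ0 (fun q r =>
      secondPartial_eq_fderiv_fderiv_apply (hD2g z (hσU hz)).differentiableAt q r ▸ hβ z hz q r) v
  have htaylor : ∀ y ∈ σ, |g y - g (x 0) - fderiv ℝ g (x 0) (y - x 0)| ≤
      β * n / 2 * ‖y - x 0‖ ^ 2 := fun y hy =>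
    (convex_convexHull ℝ _).norm_sub_sub_fderiv_le (fun z hz => hDg z (hσU hz))
      (fun z hz => hD2g z (hσU hz)) hHess (hxσ 0) hy
  set m := ⨆ k : Fin n, ‖x k.succ - x 0‖
  have hm : ∀ j, ‖x j - x 0‖ ≤ m :=
    Fin.cases (by simpa using Real.iSup_nonneg fun k => norm_nonneg _)
      (le_ciSup (Set.finite_range fun k : Fin n => ‖x k.succ - x 0‖).bddAbove)
  have hc' : β * ∑ j, α j * c j = β * n / 2 *
      ((∑ j, α j * ‖x j - x 0‖) * m + ∑ j, α j * ‖x j - x 0‖ ^ 2) := by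
    simp only [hc, Finset.sum_mul, ← Finset.sum_add_distrib, Finset.mul_sum]
    exact Finset.sum_congr rfl fun _ _ => by ring
  rw [hc']
  refine (abs_apply_sum_smul_sub_sum_mul_le (convex_convexHull ℝ _) htaylor (fun j _ => hα0 j) hα1
    fun j _ => hxσ j).trans ?_
  gcongr
  exact norm_sum_smul_sub_sq_le (fun j _ => hα0 j) hα1 fun j _ => hm j

/-- CPA interpolation error bound on a simplex (Taylor-type bound). -/
theorem stmt0 (n : ℕ)
    (x : Fin (n + 1) → EuclideanSpace ℝ (Fin n))
    -- affine independence: x₁ − x₀, …, xₙ − x₀ are linearly independent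
    (hx : LinearIndependent ℝ (fun j : Fin n => x j.succ - x 0))
    (g : EuclideanSpace ℝ (Fin n) → ℝ)
    -- g is C² on an open set containing the simplex σ = co({x_j})
    (U : Set (EuclideanSpace ℝ (Fin n))) (hU : IsOpen U)
    (hσU : convexHull ℝ (Set.range x) ⊆ U)
    (hg : ContDiffOn ℝ 2 g U)
    (β : ℝ) (hβ0 : 0 ≤ β)
    (hβ : ∀ ξ ∈ convexHull ℝ (Set.range x), ∀ q r : Fin n, |secondPartial g q r ξ| ≤ β)
    (c : Fin (n + 1) → ℝ)
    (hc : ∀ j, c j = ((n : ℝ) / 2) * ‖x j - x 0‖ *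
      ((⨆ k : Fin n, ‖x k.succ - x 0‖) + ‖x j - x 0‖))
    (α : Fin (n + 1) → ℝ) (hα0 : ∀ j, 0 ≤ α j) (hα1 : ∑ j, α j = 1) :
    |g (∑ j, α j • x j) - ∑ j, α j * g (x j)| ≤ β * ∑ j, α j * c j :=
  stmt0_general n x g U hU hσU hg β hβ0 hβ c hc α hα0 hα1
end

section
/- Let σ = co({x_j}_{j=0}^n) ⊂ ℝ^n be a simplex with affinely independent vertices, let g : ℝ^n → ℝ^n be twice continuously differentiable on an open set containing σ, and let β ≥ 0 satisfy |∂²g^{(p)}/∂x^{(q)}∂x^{(r)}(ξ)| ≤ β for all ξ ∈ σ and all p, q, r ∈ {1, …, n}. Let V : ℝ^n → ℝ be affine with gradient ∇V, and let l ∈ ℝ^n satisfy l ≥ |∇V| entrywise. Then for every x = Σ_{j=0}^n α_j x_j in σ with barycentric coordinates α_j, the Dini derivative of V at x along g satisfies D⁺V(x) ≤ Σ_{j=0}^n α_j ( g(x_j)ᵀ∇V + c_j β 1_nᵀ l ). -/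
/-!
Because `V` is affine, `D⁺V(x) = ∇Vᵀ g(x)`, so it suffices to compare each component `g⁽ᵖ⁾(x)`
with its linear interpolant `∑ α_j g⁽ᵖ⁾(x_j)`. The convex combination reproduces the first-order
Taylor polynomial of `g⁽ᵖ⁾` at `x₀` exactly, so the interpolation error is a combination of Taylor
remainders, each at most `(nβ/2)‖y - x₀‖²`: entrywise Hessian bounds `β` give the operator-norm
bound `nβ`. Estimating `‖x - x₀‖²` by `(∑ α_j ‖x_j - x₀‖) · max_k ‖x_k - x₀‖` turns the sum of
the remainders into `∑ α_j c_j β`.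
-/

open Filter Topology Set
open scoped BigOperators

/-- Dini derivative of `V` at `y` along the vector field `g`:
`D⁺V(y) = limsup_{h→0⁺} (V(y + h g(y)) − V(y))/h`, valued in extended reals. -/
noncomputable def diniDeriv {n : ℕ} (V : EuclideanSpace ℝ (Fin n) → ℝ)
    (g : EuclideanSpace ℝ (Fin n) → EuclideanSpace ℝ (Fin n))
    (y : EuclideanSpace ℝ (Fin n)) : EReal :=
  Filter.limsup (fun h : ℝ => (((V (y + h • g y) - V y) / h : ℝ) : EReal)) (𝓝[>] (0 : ℝ))

section Euclidean

variable {ι : Type*} [Fintype ι]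

lemma sum_abs_le_sqrt_card_mul_norm (u : EuclideanSpace ℝ ι) :
    ∑ i, |u i| ≤ √(Fintype.card ι) * ‖u‖ := by
  calc ∑ i, |u i| = ∑ i, |u i| * 1 := by simp only [mul_one]
    _ ≤ √(∑ i, |u i| ^ 2) * √(∑ _i : ι, (1 : ℝ) ^ 2) := Real.sum_mul_le_sqrt_mul_sqrt _ _ _
    _ = √(Fintype.card ι) * ‖u‖ := by
      simp [EuclideanSpace.norm_eq, mul_comm]

lemma norm_le_card_mul_of_abs_apply_single_le [DecidableEq ι]
    (B : EuclideanSpace ℝ ι →L[ℝ] EuclideanSpace ℝ ι →L[ℝ] ℝ) {β : ℝ} (hβ : 0 ≤ β)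
    (h : ∀ q r, |B (EuclideanSpace.single q 1) (EuclideanSpace.single r 1)| ≤ β) :
    ‖B‖ ≤ Fintype.card ι * β := by
  have hdecomp (u : EuclideanSpace ℝ ι) : u = ∑ q, u q • EuclideanSpace.single q (1 : ℝ) := by
    simpa [EuclideanSpace.basisFun_apply] using
      ((EuclideanSpace.basisFun ι ℝ).sum_repr u).symm
  refine B.opNorm_le_bound (by positivity) fun u => (B u).opNorm_le_bound (by positivity) fun w => ?_
  have hexpand : B u w = ∑ q, ∑ r, u q * w r *
      B (EuclideanSpace.single q 1) (EuclideanSpace.single r 1) := by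
    conv_lhs => rw [hdecomp u, hdecomp w]
    simp only [map_sum, map_smul, sum_apply, smul_apply,
      smul_eq_mul, Finset.mul_sum]
    rw [Finset.sum_comm]
    exact Finset.sum_congr rfl fun q _ => Finset.sum_congr rfl fun r _ => by ring
  calc ‖B u w‖ ≤ ∑ q, ∑ r, |u q| * |w r| * β := by
        rw [Real.norm_eq_abs, hexpand]
        refine (Finset.abs_sum_le_sum_abs _ _).trans (Finset.sum_le_sum fun q _ => ?_)
        refine (Finset.abs_sum_le_sum_abs _ _).trans (Finset.sum_le_sum fun r _ => ?_)
        rw [abs_mul, abs_mul]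
        exact mul_le_mul_of_nonneg_left (h q r) (by positivity)
    _ = (∑ q, |u q|) * (∑ r, |w r|) * β := by
        rw [Finset.sum_mul_sum]
        simp only [Finset.sum_mul]
    _ ≤ (√(Fintype.card ι) * ‖u‖) * (√(Fintype.card ι) * ‖w‖) * β := by
        gcongr
        · exact sum_abs_le_sqrt_card_mul_norm u
        · exact sum_abs_le_sqrt_card_mul_norm w
    _ = Fintype.card ι * β * ‖u‖ * ‖w‖ := by
        rw [mul_mul_mul_comm, Real.mul_self_sqrt (Nat.cast_nonneg _)]
        ring

end Euclidean

lemma secondPartial_eq_fderiv_fderiv {n : ℕ} {φ : EuclideanSpace ℝ (Fin n) → ℝ}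
    {ξ : EuclideanSpace ℝ (Fin n)} (hφ : DifferentiableAt ℝ (fderiv ℝ φ) ξ) (q r : Fin n) :
    secondPartial φ q r ξ =
      fderiv ℝ (fderiv ℝ φ) ξ (EuclideanSpace.single q 1) (EuclideanSpace.single r 1) := by
  have h := ((ContinuousLinearMap.apply ℝ ℝ (EuclideanSpace.single r (1 : ℝ))).hasFDerivAt.comp ξ
    hφ.hasFDerivAt).fderiv
  exact congrArg (· (EuclideanSpace.single q 1)) h

lemma norm_fderiv_fderiv_le_of_abs_secondPartial_le {n : ℕ} {φ : EuclideanSpace ℝ (Fin n) → ℝ}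
    {ξ : EuclideanSpace ℝ (Fin n)} (hφ : DifferentiableAt ℝ (fderiv ℝ φ) ξ) {β : ℝ} (hβ0 : 0 ≤ β)
    (hβ : ∀ q r, |secondPartial φ q r ξ| ≤ β) :
    ‖fderiv ℝ (fderiv ℝ φ) ξ‖ ≤ n * β := by
  have h := norm_le_card_mul_of_abs_apply_single_le _ hβ0 fun q r =>
    secondPartial_eq_fderiv_fderiv hφ q r ▸ hβ q r
  rwa [Fintype.card_fin] at h

section Taylor

variable {E F : Type*} [NormedAddCommGroup E] [NormedSpace ℝ E]
  [NormedAddCommGroup F] [NormedSpace ℝ F] {φ : E → F} {s : Set E} {K : ℝ}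

theorem Convex.norm_sub_sub_fderiv_le_of_norm_fderiv_fderiv_le (hs : Convex ℝ s)
    (hφ : ∀ y ∈ s, DifferentiableAt ℝ φ y) (hφ' : ∀ y ∈ s, DifferentiableAt ℝ (fderiv ℝ φ) y)
    (hK : ∀ y ∈ s, ‖fderiv ℝ (fderiv ℝ φ) y‖ ≤ K) {a y : E} (ha : a ∈ s) (hy : y ∈ s) :
    ‖φ y - φ a - fderiv ℝ φ a (y - a)‖ ≤ K / 2 * ‖y - a‖ ^ 2 := by
  set v := y - a
  have hseg : ∀ t ∈ Icc (0 : ℝ) 1, a + t • v ∈ s := fun t ht => by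
    simpa [v] using hs.add_smul_sub_mem ha hy ht
  have hderiv : ∀ t ∈ Icc (0 : ℝ) 1,
      HasDerivAt (fun t : ℝ => φ (a + t • v) - φ a - t • fderiv ℝ φ a v)
        (fderiv ℝ φ (a + t • v) v - fderiv ℝ φ a v) t := by
    intro t ht
    have hline : HasDerivAt (fun t : ℝ => a + t • v) v t := by
      simpa using ((hasDerivAt_id t).smul_const v).const_add a
    have hcomp := (hφ _ (hseg t ht)).hasFDerivAt.comp_hasDerivAt t hline
    have h := (hcomp.sub_const (φ a)).sub ((hasDerivAt_id t).smul_const (fderiv ℝ φ a v))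
    rwa [one_smul] at h
  have hbound : ∀ t ∈ Ico (0 : ℝ) 1,
      ‖fderiv ℝ φ (a + t • v) v - fderiv ℝ φ a v‖ ≤ K * ‖v‖ ^ 2 * t := by
    intro t ht
    have hlip := hs.norm_image_sub_le_of_norm_fderiv_le hφ' hK ha (hseg t (Ico_subset_Icc_self ht))
    calc ‖fderiv ℝ φ (a + t • v) v - fderiv ℝ φ a v‖
        ≤ ‖fderiv ℝ φ (a + t • v) - fderiv ℝ φ a‖ * ‖v‖ := (fderiv ℝ φ _ - fderiv ℝ φ a).le_opNorm v
      _ ≤ K * ‖a + t • v - a‖ * ‖v‖ := by gcongr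
      _ = K * ‖v‖ ^ 2 * t := by
        rw [add_sub_cancel_left, norm_smul, Real.norm_eq_abs, abs_of_nonneg ht.1]
        ring
  have key := image_norm_le_of_norm_deriv_right_le_deriv_boundary
    (fun t ht => (hderiv t ht).continuousAt.continuousWithinAt)
    (fun t ht => (hderiv t (Ico_subset_Icc_self ht)).hasDerivWithinAt)
    (B := fun t => K * ‖v‖ ^ 2 / 2 * t ^ 2) (by simp)
    (fun t => by simpa using ((hasDerivAt_pow 2 t).const_mul (K * ‖v‖ ^ 2 / 2)).congr_deriv (by ring))
    hbound (right_mem_Icc.2 zero_le_one)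
  simpa [v, mul_div_right_comm] using key

theorem Convex.norm_sub_sum_smul_le_of_norm_fderiv_fderiv_le (hs : Convex ℝ s)
    (hφ : ∀ y ∈ s, DifferentiableAt ℝ φ y) (hφ' : ∀ y ∈ s, DifferentiableAt ℝ (fderiv ℝ φ) y)
    (hK : ∀ y ∈ s, ‖fderiv ℝ (fderiv ℝ φ) y‖ ≤ K) {ι : Type*} [Fintype ι] {x : ι → E}
    (hx : ∀ j, x j ∈ s) {α : ι → ℝ} (hα0 : ∀ j, 0 ≤ α j) (hα1 : ∑ j, α j = 1) {a : E}
    (ha : a ∈ s) {M : ℝ} (hM : ∀ j, ‖x j - a‖ ≤ M) :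
    ‖φ (∑ j, α j • x j) - ∑ j, α j • φ (x j)‖ ≤
      K / 2 * ∑ j, α j * (‖x j - a‖ * (M + ‖x j - a‖)) := by
  set R : E → F := fun y => φ y - φ a - fderiv ℝ φ a (y - a)
  have hR : ∀ y ∈ s, ‖R y‖ ≤ K / 2 * ‖y - a‖ ^ 2 := fun y hy =>
    hs.norm_sub_sub_fderiv_le_of_norm_fderiv_fderiv_le hφ hφ' hK ha hy
  have hK0 : 0 ≤ K := (norm_nonneg (fderiv ℝ (fderiv ℝ φ) a)).trans (hK a ha)
  set xb := ∑ j, α j • x j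
  have hxb : xb ∈ s := hs.sum_mem (fun j _ => hα0 j) hα1 fun j _ => hx j
  have hxb_sub : xb - a = ∑ j, α j • (x j - a) := by
    simp only [xb, smul_sub, Finset.sum_sub_distrib, ← Finset.sum_smul, hα1, one_smul]
  have hnorm : ‖xb - a‖ ≤ ∑ j, α j * ‖x j - a‖ := by
    rw [hxb_sub]
    refine (norm_sum_le _ _).trans_eq (Finset.sum_congr rfl fun j _ => ?_)
    rw [norm_smul, Real.norm_of_nonneg (hα0 j)]
  have hnormM : ‖xb - a‖ ≤ M := by
    calc ‖xb - a‖ ≤ ∑ j, α j * M := hnorm.trans (by gcongr with j; exacts [hα0 j, hM j])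
      _ = M := by rw [← Finset.sum_mul, hα1, one_mul]
  have hsplit : φ xb - ∑ j, α j • φ (x j) = R xb - ∑ j, α j • R (x j) := by
    simp only [R, smul_sub, Finset.sum_sub_distrib, ← Finset.sum_smul, hα1, one_smul,
      ← map_smul, ← map_sum]
    abel
  calc ‖φ xb - ∑ j, α j • φ (x j)‖
      ≤ ‖R xb‖ + ∑ j, α j * ‖R (x j)‖ := by
        rw [hsplit]
        refine (norm_sub_le _ _).trans (add_le_add le_rfl ((norm_sum_le _ _).trans_eq ?_))
        exact Finset.sum_congr rfl fun j _ => by rw [norm_smul, Real.norm_of_nonneg (hα0 j)]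
    _ ≤ K / 2 * ((∑ j, α j * ‖x j - a‖) * M) + ∑ j, α j * (K / 2 * ‖x j - a‖ ^ 2) := by
        gcongr with j
        · refine (hR xb hxb).trans ?_
          rw [sq]
          gcongr
          exact (norm_nonneg _).trans hnorm
        · exact hα0 j
        · exact hR _ (hx j)
    _ = K / 2 * ∑ j, α j * (‖x j - a‖ * (M + ‖x j - a‖)) := by
        simp only [Finset.sum_mul, Finset.mul_sum, ← Finset.sum_add_distrib]
        exact Finset.sum_congr rfl fun j _ => by ring

end Taylor

lemma diniDeriv_eq_of_affine {n : ℕ} {V : EuclideanSpace ℝ (Fin n) → ℝ} {gradV : Fin n → ℝ}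
    {ω : ℝ} (hV : ∀ y, V y = (∑ i, gradV i * y i) + ω)
    (g : EuclideanSpace ℝ (Fin n) → EuclideanSpace ℝ (Fin n)) (y : EuclideanSpace ℝ (Fin n)) :
    diniDeriv V g y = ((∑ i, g y i * gradV i : ℝ) : EReal) := by
  have hdiff (h : ℝ) : V (y + h • g y) - V y = h * ∑ i, g y i * gradV i := by
    rw [hV, hV, Finset.mul_sum, add_sub_add_right_eq_sub, ← Finset.sum_sub_distrib]
    refine Finset.sum_congr rfl fun i _ => ?_
    simp only [PiLp.add_apply, PiLp.smul_apply, smul_eq_mul]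
    ring
  have hev : (fun h : ℝ => (((V (y + h • g y) - V y) / h : ℝ) : EReal))
      =ᶠ[𝓝[>] 0] fun _ => ((∑ i, g y i * gradV i : ℝ) : EReal) := by
    filter_upwards [self_mem_nhdsWithin] with h hh
    rw [hdiff, mul_div_cancel_left₀ _ (ne_of_gt hh)]
  rw [diniDeriv, limsup_congr hev, limsup_const]

lemma sum_mul_le_of_abs_sub_sum_le {ι κ : Type*} [Fintype ι] [Fintype κ] {u w l : ι → ℝ}
    {v : κ → ι → ℝ} {α d : κ → ℝ} (hl : ∀ i, |w i| ≤ l i)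
    (hu : ∀ i, |u i - ∑ j, α j * v j i| ≤ ∑ j, α j * d j) :
    ∑ i, u i * w i ≤ ∑ j, α j * ((∑ i, v j i * w i) + d j * ∑ i, l i) := by
  have hterm : ∀ i, u i * w i ≤ (∑ j, α j * v j i) * w i + (∑ j, α j * d j) * l i := by
    intro i
    have := (le_abs_self _).trans <| (abs_mul (u i - ∑ j, α j * v j i) (w i)).trans_le <|
      mul_le_mul (hu i) (hl i) (abs_nonneg _) ((abs_nonneg _).trans (hu i))
    nlinarith
  have hswap : ∑ i, (∑ j, α j * v j i) * w i = ∑ j, α j * ∑ i, v j i * w i := by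
    simp only [Finset.sum_mul, Finset.mul_sum, mul_assoc]
    exact Finset.sum_comm
  refine (Finset.sum_le_sum fun i _ => hterm i).trans_eq ?_
  rw [Finset.sum_add_distrib, hswap, ← Finset.mul_sum, Finset.sum_mul, ← Finset.sum_add_distrib]
  exact Finset.sum_congr rfl fun j _ => by ring

lemma norm_sub_zero_le_iSup_norm_succ_sub {E : Type*} [SeminormedAddCommGroup E] {n : ℕ}
    (x : Fin (n + 1) → E) (j : Fin (n + 1)) : ‖x j - x 0‖ ≤ ⨆ k : Fin n, ‖x k.succ - x 0‖ := by
  induction j using Fin.cases with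
  | zero => simpa using Real.iSup_nonneg fun k : Fin n => norm_nonneg (x k.succ - x 0)
  | succ k =>
    exact le_ciSup (f := fun k : Fin n => ‖x k.succ - x 0‖) (Set.finite_range _).bddAbove k

theorem stmt1_general (n : ℕ)
    (x : Fin (n + 1) → EuclideanSpace ℝ (Fin n))
    (g : EuclideanSpace ℝ (Fin n) → EuclideanSpace ℝ (Fin n))
    (U : Set (EuclideanSpace ℝ (Fin n))) (hU : IsOpen U)
    (hσU : convexHull ℝ (Set.range x) ⊆ U)
    (hg : ContDiffOn ℝ 2 g U)
    (β : ℝ) (hβ0 : 0 ≤ β)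
    (hβ : ∀ ξ ∈ convexHull ℝ (Set.range x), ∀ p q r : Fin n,
      |secondPartial (fun y => g y p) q r ξ| ≤ β)
    -- V is affine with gradient gradV: V(y) = gradVᵀ y + ω
    (V : EuclideanSpace ℝ (Fin n) → ℝ) (gradV : Fin n → ℝ) (ω : ℝ)
    (hV : ∀ y, V y = (∑ i, gradV i * y i) + ω)
    (l : Fin n → ℝ) (hl : ∀ i, |gradV i| ≤ l i)
    (c : Fin (n + 1) → ℝ)
    (hc : ∀ j, c j = ((n : ℝ) / 2) * ‖x j - x 0‖ *
      ((⨆ k : Fin n, ‖x k.succ - x 0‖) + ‖x j - x 0‖))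
    (α : Fin (n + 1) → ℝ) (hα0 : ∀ j, 0 ≤ α j) (hα1 : ∑ j, α j = 1) :
    diniDeriv V g (∑ j, α j • x j) ≤
      ((∑ j, α j * ((∑ i, g (x j) i * gradV i) + c j * β * ∑ i, l i) : ℝ) : EReal) := by
  have hxσ : ∀ j, x j ∈ convexHull ℝ (Set.range x) := fun j => subset_convexHull ℝ _ ⟨j, rfl⟩
  have hcomp : ∀ p, |g (∑ j, α j • x j) p - ∑ j, α j * g (x j) p| ≤ ∑ j, α j * (c j * β) := by
    intro p
    have hgp : ContDiffOn ℝ 2 (fun y => g y p) U :=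
      (EuclideanSpace.proj (𝕜 := ℝ) p).contDiff.comp_contDiffOn hg
    have hgp_at : ∀ y ∈ convexHull ℝ (Set.range x), ContDiffAt ℝ 2 (fun y => g y p) y :=
      fun y hy => hgp.contDiffAt (hU.mem_nhds (hσU hy))
    have hgp' : ∀ y ∈ convexHull ℝ (Set.range x),
        DifferentiableAt ℝ (fderiv ℝ fun y => g y p) y := fun y hy =>
      ((hgp_at y hy).fderiv_right (m := 1) le_rfl).differentiableAt one_ne_zero
    have h := (convex_convexHull ℝ _).norm_sub_sum_smul_le_of_norm_fderiv_fderiv_le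
      (fun y hy => (hgp_at y hy).differentiableAt two_ne_zero) hgp'
      (fun y hy => norm_fderiv_fderiv_le_of_abs_secondPartial_le (hgp' y hy) hβ0 (hβ y hy p))
      hxσ hα0 hα1 (hxσ 0) (norm_sub_zero_le_iSup_norm_succ_sub x)
    simp only [Real.norm_eq_abs, smul_eq_mul] at h
    refine h.trans_eq ?_
    rw [Finset.mul_sum]
    exact Finset.sum_congr rfl fun j _ => by rw [hc]; ring
  rw [diniDeriv_eq_of_affine hV, EReal.coe_le_coe_iff]
  exact sum_mul_le_of_abs_sub_sum_le hl hcomp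

/-- upper bound on the Dini derivative of an affine `V` along `g`
on a simplex, in terms of vertex data. -/
theorem stmt1 (n : ℕ)
    (x : Fin (n + 1) → EuclideanSpace ℝ (Fin n))
    (hx : LinearIndependent ℝ (fun j : Fin n => x j.succ - x 0))
    (g : EuclideanSpace ℝ (Fin n) → EuclideanSpace ℝ (Fin n))
    (U : Set (EuclideanSpace ℝ (Fin n))) (hU : IsOpen U)
    (hσU : convexHull ℝ (Set.range x) ⊆ U)
    (hg : ContDiffOn ℝ 2 g U)
    (β : ℝ) (hβ0 : 0 ≤ β)
    (hβ : ∀ ξ ∈ convexHull ℝ (Set.range x), ∀ p q r : Fin n,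
      |secondPartial (fun y => g y p) q r ξ| ≤ β)
    -- V is affine with gradient gradV: V(y) = gradVᵀ y + ω
    (V : EuclideanSpace ℝ (Fin n) → ℝ) (gradV : Fin n → ℝ) (ω : ℝ)
    (hV : ∀ y, V y = (∑ i, gradV i * y i) + ω)
    (l : Fin n → ℝ) (hl : ∀ i, |gradV i| ≤ l i)
    (c : Fin (n + 1) → ℝ)
    (hc : ∀ j, c j = ((n : ℝ) / 2) * ‖x j - x 0‖ *
      ((⨆ k : Fin n, ‖x k.succ - x 0‖) + ‖x j - x 0‖))
    (α : Fin (n + 1) → ℝ) (hα0 : ∀ j, 0 ≤ α j) (hα1 : ∑ j, α j = 1) :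
    diniDeriv V g (∑ j, α j • x j) ≤
      ((∑ j, α j * ((∑ i, g (x j) i * gradV i) + c j * β * ∑ i, l i) : ℝ) : EReal) :=
  stmt1_general n x g U hU hσU hg β hβ0 hβ V gradV ω hV l hl c hc α hα0 hα1
end

section
/- Let U ⊆ ℝ^n be open and V : U → ℝ be Lipschitz continuous. Let I ⊆ ℝ be an interval, t an interior point of I (or its left endpoint), and x : I → ℝ^n a function that is differentiable at t from the right with right derivative x'(t), and such that x(t) ∈ U. Then limsup_{h→0⁺} (V(x(t+h)) − V(x(t)))/h ≤ limsup_{h→0⁺} (V(x(t) + h·x'(t)) − V(x(t)))/h. -/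
/-!
Split the difference quotient of `V ∘ x` into the quotient along the tangent line
`h ↦ x t + h • x'` plus the error `(V (x (t + h)) - V (x t + h • x')) / h`. The Lipschitz bound
makes the error `O(‖x (t + h) - x t - h • x'‖ / h)`, which tends to `0` by right
differentiability, and an error tending to `0` does not increase the limsup.
-/

open Filter Topology Set Asymptotics

theorem EReal.limsup_add_le_of_tendsto_zero {α : Type*} {l : Filter α} [l.NeBot]
    {u v : α → EReal} (hv : Tendsto v l (𝓝 0)) :
    limsup (u + v) l ≤ limsup u l := by
  have hv0 : limsup v l = 0 := hv.limsup_eq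
  calc limsup (u + v) l ≤ limsup u l + limsup v l :=
        EReal.limsup_add_le (.inr (hv0 ▸ EReal.zero_ne_top)) (.inr (hv0 ▸ EReal.zero_ne_bot))
    _ = limsup u l := by rw [hv0, add_zero]

theorem LipschitzOnWith.isLittleO_comp_sub {α E F G : Type*} [SeminormedAddCommGroup E]
    [SeminormedAddCommGroup F] [Norm G] {K : NNReal} {f : E → F} {s : Set E} {l : Filter α}
    {y z : α → E} {r : α → G} (hf : LipschitzOnWith K f s) (hy : ∀ᶠ a in l, y a ∈ s)
    (hz : ∀ᶠ a in l, z a ∈ s) (h : (fun a => y a - z a) =o[l] r) :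
    (fun a => f (y a) - f (z a)) =o[l] r := by
  refine (IsBigO.of_bound K ?_).trans_isLittleO h
  filter_upwards [hy, hz] with a hya hza
  exact hf.norm_sub_le hya hza

theorem tendsto_const_add_nhdsGT_zero {G : Type*} [TopologicalSpace G] [AddCommGroup G]
    [PartialOrder G] [IsOrderedAddMonoid G] [ContinuousAdd G] (t : G) :
    Tendsto (t + ·) (𝓝[>] 0) (𝓝[>] t) := by
  have := (map_add_left_nhdsGT (c := t) (a := 0)).le
  rwa [add_zero] at this

theorem HasDerivWithinAt.isLittleO_add_sub_tangent_nhdsGT {E : Type*} [NormedAddCommGroup E]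
    [NormedSpace ℝ E] {f : ℝ → E} {f' : E} {t : ℝ} (hf : HasDerivWithinAt f f' (Ioi t) t) :
    (fun h => f (t + h) - (f t + h • f')) =o[𝓝[>] 0] fun h => h := by
  simpa only [Function.comp_def, add_sub_cancel_left, sub_sub] using
    hf.isLittleO.comp_tendsto (tendsto_const_add_nhdsGT_zero t)

/-- for Lipschitz `V` and a curve `x` that is right-differentiable at `t`
with right derivative `x'`, the Dini derivative of `V ∘ x` at `t` is bounded by the
Dini derivative of `V` at `x(t)` in the direction `x'`. -/
theorem stmt5 (n : ℕ)
    (U : Set (EuclideanSpace ℝ (Fin n))) (hU : IsOpen U)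
    (V : EuclideanSpace ℝ (Fin n) → ℝ)
    -- V is Lipschitz continuous on U
    (hV : ∃ L : ℝ, 0 ≤ L ∧ ∀ y ∈ U, ∀ y' ∈ U, |V y - V y'| ≤ L * ‖y - y'‖)
    -- I is an interval, t ∈ I is an interior point or the left endpoint of I
    (I : Set ℝ) (hI : I.OrdConnected) (t : ℝ) (ht : t ∈ I)
    (hright : ∃ s ∈ I, t < s)
    (x : ℝ → EuclideanSpace ℝ (Fin n)) (x' : EuclideanSpace ℝ (Fin n))
    -- x is differentiable at t from the right with right derivative x'
    (hx : HasDerivWithinAt x x' (I ∩ Set.Ici t) t)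
    (hxt : x t ∈ U) :
    Filter.limsup (fun h : ℝ => (((V (x (t + h)) - V (x t)) / h : ℝ) : EReal)) (𝓝[>] (0 : ℝ))
      ≤ Filter.limsup (fun h : ℝ => (((V (x t + h • x') - V (x t)) / h : ℝ) : EReal))
          (𝓝[>] (0 : ℝ)) := by
  obtain ⟨L, hL0, hLip⟩ := hV
  have hVL : LipschitzOnWith ⟨L, hL0⟩ V U := .of_dist_le_mul fun y hy y' hy' => by
    rw [dist_eq_norm, dist_eq_norm, Real.norm_eq_abs]
    exact hLip y hy y' hy'
  obtain ⟨s, hsI, hts⟩ := hright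
  have hxR : HasDerivWithinAt x x' (Ioi t) t :=
    hx.mono_of_mem_nhdsWithin <| mem_of_superset (Ioo_mem_nhdsGT hts) fun r hr =>
      ⟨hI.out ht hsI (Ioo_subset_Icc_self hr), hr.1.le⟩
  have htangent := hxR.isLittleO_add_sub_tangent_nhdsGT
  have hline : Tendsto (fun h : ℝ => x t + h • x') (𝓝[>] 0) (𝓝 (x t)) :=
    (Continuous.tendsto' (by fun_prop) 0 _ (by simp)).mono_left nhdsWithin_le_nhds
  have hcurve : Tendsto (fun h : ℝ => x (t + h)) (𝓝[>] 0) (𝓝 (x t)) :=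
    hxR.continuousWithinAt.tendsto.comp (tendsto_const_add_nhdsGT_zero t)
  have herr := (hVL.isLittleO_comp_sub (hcurve.eventually_mem (hU.mem_nhds hxt))
    (hline.eventually_mem (hU.mem_nhds hxt)) htangent).tendsto_div_nhds_zero
  calc _ = limsup ((fun h : ℝ => (((V (x t + h • x') - V (x t)) / h : ℝ) : EReal))
        + fun h => (((V (x (t + h)) - V (x t + h • x')) / h : ℝ) : EReal)) (𝓝[>] 0) := by
        congr 1; ext h; simp only [Pi.add_apply, ← EReal.coe_add, ← add_div, sub_add_sub_cancel']
    _ ≤ _ := EReal.limsup_add_le_of_tendsto_zero (by simpa using EReal.tendsto_coe.2 herr)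
end

section
/- Let Ω ⊂ ℝ^n be compact with 0 in its interior Ω°, let g : Ω → ℝ^n be Lipschitz continuous with g(0) = 0, and let V : Ω → ℝ be Lipschitz continuous with V(0) = 0. Suppose there are constants a, b₁, b₂ > 0 such that b₁‖y‖^a ≤ V(y) for all y ∈ Ω and D⁺V(y) ≤ −b₂ V(y) for all y ∈ Ω° \ {0}, where D⁺V(y) := limsup_{h→0⁺}(V(y + h·g(y)) − V(y))/h. Let r > 0 be such that the sublevel set 𝒜 := {y ∈ Ω : V(y) ≤ r} is contained in Ω°. Then for every continuous x : [t₀, T) → Ω that is differentiable with x'(t) = g(x(t)) for all t ∈ [t₀, T) and satisfies x(t₀) ∈ 𝒜, one has x(t) ∈ 𝒜 for all t ∈ [t₀, T) and ‖x(t)‖ ≤ (r/b₁)^{1/a} · e^{−(b₂/a)(t − t₀)} for all t ∈ [t₀, T). -/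
/-!
Along a solution, `t ↦ V (x t)` has right upper Dini derivative at most `-b₂ V (x t)` wherever
`x t ∈ Ω° \ {0}`: since `V` is Lipschitz, replacing `x (t + h)` by `x t + h • g (x t)` costs only
`o(h)`. The barrier `r e^{-β (t - t₀)}`, `0 ≤ β < b₂`, can only be touched where
`0 < V (x t) ≤ r`, hence inside `Ω° \ {0}`, and there its slope `-β V (x t)` strictly exceeds that
Dini bound, so `V (x t)` never crosses it. Letting `β → b₂` and using `b₁ ‖y‖ ^ a ≤ V y` gives the
estimate on `‖x t‖`.
-/

open Filter Topology Set
open scoped NNReal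

theorem LipschitzOnWith.eventually_slope_comp_lt {E : Type*} [NormedAddCommGroup E]
    [NormedSpace ℝ E] {V : E → ℝ} {K : ℝ≥0} {U : Set E} {γ : ℝ → E} {v : E} {t d : ℝ}
    (hV : LipschitzOnWith K V U) (hU : U ∈ 𝓝 (γ t)) (hγ : HasDerivWithinAt γ v (Ioi t) t)
    (hd : ∀ c > d, ∀ᶠ h in 𝓝[>] 0, (V (γ t + h • v) - V (γ t)) / h < c) :
    ∀ c > d, ∀ᶠ z in 𝓝[>] t, slope (V ∘ γ) t z < c := by
  intro c hc
  obtain ⟨c₁, hdc₁, hc₁c⟩ := exists_between hc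
  have hshift : Tendsto (fun z => z - t) (𝓝[>] t) (𝓝[>] 0) := by
    refine tendsto_nhdsWithin_of_tendsto_nhds_of_eventually_within _ ?_ ?_
    · simpa using (tendsto_id.sub_const t).mono_left (nhdsWithin_le_nhds (a := t) (s := Ioi t))
    · filter_upwards [self_mem_nhdsWithin] with z (hz : t < z) using sub_pos.2 hz
  have hdir := hshift.eventually (hd c₁ hdc₁)
  have hslope : Tendsto (fun z => K * ‖slope γ t z - v‖) (𝓝[>] t) (𝓝 0) := by
    simpa using ((hasDerivWithinAt_iff_tendsto_slope.1 hγ).sub_const v).norm.const_mul (K : ℝ)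
  have hγU : ∀ᶠ z in 𝓝[>] t, γ z ∈ U :=
    hγ.continuousWithinAt.eventually_mem hU
  have hlineU : ∀ᶠ z in 𝓝[>] t, γ t + (z - t) • v ∈ U := by
    have hline : Continuous fun z : ℝ => γ t + (z - t) • v := by fun_prop
    simpa using (hline.tendsto t).mono_left nhdsWithin_le_nhds |>.eventually_mem (by simpa using hU)
  filter_upwards [hdir, hslope.eventually (gt_mem_nhds (sub_pos.2 hc₁c)), hγU, hlineU,
    self_mem_nhdsWithin] with z hz_dir hz_err hz_γ hz_line (hz : t < z)
  have hpos : 0 < z - t := sub_pos.2 hz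
  have hgap : γ z - (γ t + (z - t) • v) = (z - t) • (slope γ t z - v) := by
    rw [smul_sub, sub_smul_slope, vsub_eq_sub]; abel
  have hlip : V (γ z) - V (γ t + (z - t) • v) ≤ K * ((z - t) * ‖slope γ t z - v‖) := by
    have := hV.dist_le_mul _ hz_γ _ hz_line
    rw [Real.dist_eq, dist_eq_norm, hgap, norm_smul, Real.norm_of_nonneg hpos.le] at this
    exact (le_abs_self _).trans this
  calc slope (V ∘ γ) t z
      = (V (γ t + (z - t) • v) - V (γ t)) / (z - t)
          + (V (γ z) - V (γ t + (z - t) • v)) / (z - t) := by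
        rw [slope_def_field, ← add_div]; simp only [Function.comp, sub_add_sub_cancel']
    _ ≤ (V (γ t + (z - t) • v) - V (γ t)) / (z - t) + K * ‖slope γ t z - v‖ := by
        gcongr
        rw [div_le_iff₀ hpos]; linarith
    _ < c₁ + (c - c₁) := add_lt_add hz_dir hz_err
    _ = c := by ring

theorem image_le_of_eventually_slope_lt_deriv_boundary {f B B' : ℝ → ℝ} {a b : ℝ}
    (hf : ContinuousOn f (Icc a b)) (hB : ∀ t, HasDerivAt B (B' t) t) (ha : f a ≤ B a)
    (hslope : ∀ t ∈ Ico a b, f t = B t → ∃ c < B' t, ∀ᶠ z in 𝓝[>] t, slope f t z < c) :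
    ∀ ⦃t⦄, t ∈ Icc a b → f t ≤ B t := by
  change Icc a b ⊆ {t | f t ≤ B t}
  have hfB : ContinuousOn (fun t => (f t, B t)) (Icc a b) :=
    hf.prodMk fun t _ => (hB t).continuousAt.continuousWithinAt
  have hclosed : IsClosed ({t | f t ≤ B t} ∩ Icc a b) := by
    rw [inter_comm]
    exact hfB.preimage_isClosed_of_isClosed isClosed_Icc OrderClosedTopology.isClosed_le'
  refine hclosed.Icc_subset_of_forall_mem_nhdsWithin ha ?_
  rintro t ⟨hle : f t ≤ B t, ht⟩
  rcases hle.lt_or_eq with hlt | heq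
  · have : ∀ᶠ z in 𝓝[Icc a b] t, f z < B z :=
      hfB t (Ico_subset_Icc_self ht) (isOpen_lt continuous_fst continuous_snd |>.mem_nhds hlt)
    exact Eventually.mono (nhdsWithin_le_of_mem (Icc_mem_nhdsGT_of_mem ht) this) fun _ => le_of_lt
  · obtain ⟨c, hcB, hfc⟩ := hslope t ht heq
    have hBc : ∀ᶠ z in 𝓝[>] t, c < slope B t z :=
      (hasDerivWithinAt_iff_tendsto_slope' (lt_irrefl t)).1 (hB t).hasDerivWithinAt
        |>.eventually (lt_mem_nhds hcB)
    filter_upwards [hfc, hBc, self_mem_nhdsWithin] with z hfz hBz (hz : t < z)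
    have := (hfz.trans hBz).le
    rwa [slope_def_field, slope_def_field, div_le_div_iff_of_pos_right (sub_pos.2 hz), heq,
      sub_le_sub_iff_right] at this

section Lyapunov

variable {E : Type*} [NormedAddCommGroup E] [NormedSpace ℝ E] {Ω : Set E} {V : E → ℝ}
  {g : E → E} {K : ℝ≥0} {b₂ r : ℝ} {x : ℝ → E} {t₀ t₁ : ℝ}

theorem le_mul_exp_of_dini_le_of_lt (hV : LipschitzOnWith K V Ω) (hV0 : V 0 = 0)
    (hdini : ∀ y ∈ interior Ω, y ≠ 0 →
      ∀ c > -b₂ * V y, ∀ᶠ h in 𝓝[>] 0, (V (y + h • g y) - V y) / h < c)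
    (hr : 0 < r) (hA : {y | y ∈ Ω ∧ V y ≤ r} ⊆ interior Ω)
    (hx : ContinuousOn x (Icc t₀ t₁)) (hxΩ : ∀ t ∈ Icc t₀ t₁, x t ∈ Ω)
    (hode : ∀ t ∈ Ico t₀ t₁, HasDerivWithinAt x (g (x t)) (Ioi t) t) (hinit : V (x t₀) ≤ r)
    {β : ℝ} (hβ : 0 ≤ β) (hβb₂ : β < b₂) :
    ∀ ⦃t⦄, t ∈ Icc t₀ t₁ → V (x t) ≤ r * Real.exp (-β * (t - t₀)) := by
  have hB : ∀ t, HasDerivAt (fun t => r * Real.exp (-β * (t - t₀)))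
      (-β * (r * Real.exp (-β * (t - t₀)))) t := fun t =>
    ((((hasDerivAt_id' t).sub_const t₀).const_mul (-β)).exp.const_mul r).congr_deriv (by ring)
  refine image_le_of_eventually_slope_lt_deriv_boundary (f := V ∘ x)
    (hV.continuousOn.comp hx hxΩ) hB (by simpa using hinit) ?_
  intro t ht heq
  simp only [Function.comp_apply] at heq
  have hVpos : 0 < V (x t) := heq ▸ by positivity
  have hVr : V (x t) ≤ r :=
    heq ▸ mul_le_of_le_one_right hr.le (Real.exp_le_one_iff.2 (by nlinarith [ht.1]))
  have hint : x t ∈ interior Ω := hA ⟨hxΩ t (Ico_subset_Icc_self ht), hVr⟩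
  have hne : x t ≠ 0 := fun h => by simp [h, hV0] at hVpos
  obtain ⟨c, hbc, hcβ⟩ : ∃ c, -b₂ * V (x t) < c ∧ c < -β * V (x t) :=
    exists_between (by nlinarith)
  exact ⟨c, heq ▸ hcβ, hV.eventually_slope_comp_lt (mem_interior_iff_mem_nhds.1 hint)
    (hode t ht) (hdini _ hint hne) c hbc⟩

theorem le_mul_exp_of_dini_le (hV : LipschitzOnWith K V Ω) (hV0 : V 0 = 0)
    (hdini : ∀ y ∈ interior Ω, y ≠ 0 →
      ∀ c > -b₂ * V y, ∀ᶠ h in 𝓝[>] 0, (V (y + h • g y) - V y) / h < c)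
    (hb₂ : 0 < b₂) (hr : 0 < r) (hA : {y | y ∈ Ω ∧ V y ≤ r} ⊆ interior Ω)
    (hx : ContinuousOn x (Icc t₀ t₁)) (hxΩ : ∀ t ∈ Icc t₀ t₁, x t ∈ Ω)
    (hode : ∀ t ∈ Ico t₀ t₁, HasDerivWithinAt x (g (x t)) (Ioi t) t) (hinit : V (x t₀) ≤ r) :
    ∀ ⦃t⦄, t ∈ Icc t₀ t₁ → V (x t) ≤ r * Real.exp (-b₂ * (t - t₀)) := by
  intro t ht
  have hcont : Continuous fun β => r * Real.exp (-β * (t - t₀)) := by fun_prop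
  refine ge_of_tendsto (hcont.tendsto b₂ |>.mono_left (nhdsWithin_le_nhds (s := Iio b₂))) ?_
  filter_upwards [Ioo_mem_nhdsLT hb₂] with β hβ
  exact le_mul_exp_of_dini_le_of_lt hV hV0 hdini hr hA hx hxΩ hode hinit hβ.1.le hβ.2 ht

end Lyapunov

theorem le_rpow_mul_exp_of_mul_rpow_le {u a b₁ b₂ r s : ℝ} (hu : 0 ≤ u) (ha : 0 < a)
    (hb₁ : 0 < b₁) (h : b₁ * u ^ a ≤ r * Real.exp (-b₂ * s)) :
    u ≤ (r / b₁) ^ (1 / a) * Real.exp (-(b₂ / a) * s) := by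
  have hua : u ^ a ≤ r / b₁ * Real.exp (-b₂ * s) := by
    rw [div_mul_eq_mul_div, le_div_iff₀ hb₁]; linarith
  have hr : 0 ≤ r / b₁ := by
    have := (Real.rpow_nonneg hu a).trans hua
    exact nonneg_of_mul_nonneg_left this (Real.exp_pos _)
  calc u = (u ^ a) ^ (1 / a) := by
        rw [← Real.rpow_mul hu, mul_one_div_cancel ha.ne', Real.rpow_one]
    _ ≤ (r / b₁ * Real.exp (-b₂ * s)) ^ (1 / a) := by gcongr
    _ = (r / b₁) ^ (1 / a) * Real.exp (-(b₂ / a) * s) := by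
        rw [Real.mul_rpow hr (Real.exp_pos _).le, ← Real.exp_mul]; ring_nf

theorem stmt7_general (n : ℕ)
    (Ω : Set (EuclideanSpace ℝ (Fin n)))
    (g : EuclideanSpace ℝ (Fin n) → EuclideanSpace ℝ (Fin n))
    (V : EuclideanSpace ℝ (Fin n) → ℝ)
    (hVlip : ∃ L : ℝ, 0 ≤ L ∧ ∀ y ∈ Ω, ∀ y' ∈ Ω, |V y - V y'| ≤ L * ‖y - y'‖)
    (hV0 : V 0 = 0)
    (a b₁ b₂ : ℝ) (ha : 0 < a) (hb₁ : 0 < b₁) (hb₂ : 0 < b₂)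
    (hlow : ∀ y ∈ Ω, b₁ * ‖y‖ ^ a ≤ V y)
    (hdini : ∀ y ∈ interior Ω, y ≠ 0 →
      Filter.limsup (fun h : ℝ => (((V (y + h • g y) - V y) / h : ℝ) : EReal)) (𝓝[>] (0 : ℝ))
        ≤ ((-b₂ * V y : ℝ) : EReal))
    (r : ℝ) (hr : 0 < r)
    (hA : {y | y ∈ Ω ∧ V y ≤ r} ⊆ interior Ω)
    -- a solution x : [t₀, T) → Ω of ẋ = g(x) starting in 𝒜
    (t₀ : ℝ) (T : EReal)
    (x : ℝ → EuclideanSpace ℝ (Fin n))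
    (hmem : ∀ t : ℝ, t₀ ≤ t → (t : EReal) < T → x t ∈ Ω)
    (hode : ∀ t : ℝ, t₀ ≤ t → (t : EReal) < T →
      HasDerivWithinAt x (g (x t)) {s : ℝ | t₀ ≤ s ∧ (s : EReal) < T} t)
    (hinit : x t₀ ∈ Ω ∧ V (x t₀) ≤ r) :
    ∀ t : ℝ, t₀ ≤ t → (t : EReal) < T →
      (x t ∈ Ω ∧ V (x t) ≤ r) ∧
      ‖x t‖ ≤ (r / b₁) ^ (1 / a) * Real.exp (-(b₂ / a) * (t - t₀)) := by
  intro t ht₀ htT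
  obtain ⟨L, -, hL⟩ := hVlip
  have hV : LipschitzOnWith (Real.toNNReal L) V Ω :=
    LipschitzOnWith.of_dist_le' fun y hy y' hy' => hL y hy y' hy'
  have hdini' : ∀ y ∈ interior Ω, y ≠ 0 →
      ∀ c > -b₂ * V y, ∀ᶠ h in 𝓝[>] 0, (V (y + h • g y) - V y) / h < c :=
    fun y hy hy0 c hc => (eventually_lt_of_limsup_lt ((hdini y hy hy0).trans_lt
      (EReal.coe_lt_coe_iff.2 hc))).mono fun _ h => EReal.coe_lt_coe_iff.1 h
  have hsub : Icc t₀ t ⊆ {s : ℝ | t₀ ≤ s ∧ (s : EReal) < T} :=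
    fun s hs => ⟨hs.1, (EReal.coe_le_coe_iff.2 hs.2).trans_lt htT⟩
  have hx : ContinuousOn x (Icc t₀ t) :=
    fun s hs => (hode s (hsub hs).1 (hsub hs).2).continuousWithinAt.mono hsub
  have hderiv : ∀ s ∈ Ico t₀ t, HasDerivWithinAt x (g (x s)) (Ioi s) s :=
    fun s hs => (hode s hs.1 (hsub (Ico_subset_Icc_self hs)).2).mono_of_mem_nhdsWithin <|
      mem_of_superset (Ioo_mem_nhdsGT hs.2) fun u hu => hsub ⟨hs.1.trans hu.1.le, hu.2.le⟩
  have hdecay : V (x t) ≤ r * Real.exp (-b₂ * (t - t₀)) :=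
    le_mul_exp_of_dini_le hV hV0 hdini' hb₂ hr hA hx
      (fun s hs => hmem s (hsub hs).1 (hsub hs).2) hderiv hinit.2 ⟨ht₀, le_rfl⟩
  have hxΩ : x t ∈ Ω := hmem t ht₀ htT
  refine ⟨⟨hxΩ, hdecay.trans ?_⟩, le_rpow_mul_exp_of_mul_rpow_le (norm_nonneg _) ha hb₁
    ((hlow _ hxΩ).trans hdecay)⟩
  exact mul_le_of_le_one_right hr.le (Real.exp_le_one_iff.2 (by nlinarith))

/-- exponential stability with invariant sublevel set: under Lyapunov
conditions with a Lipschitz CPA-type function `V`, every solution starting in the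
sublevel set `𝒜 = {y ∈ Ω : V(y) ≤ r} ⊆ Ω°` stays in `𝒜` and satisfies
`‖x(t)‖ ≤ (r/b₁)^{1/a} e^{−(b₂/a)(t−t₀)}`.  (`T ≤ ∞` is encoded as `T : EReal`.) -/
theorem stmt7 (n : ℕ)
    (Ω : Set (EuclideanSpace ℝ (Fin n))) (hΩc : IsCompact Ω)
    (h0 : (0 : EuclideanSpace ℝ (Fin n)) ∈ interior Ω)
    (g : EuclideanSpace ℝ (Fin n) → EuclideanSpace ℝ (Fin n))
    (hg : ∃ L : ℝ, 0 ≤ L ∧ ∀ y ∈ Ω, ∀ y' ∈ Ω, ‖g y - g y'‖ ≤ L * ‖y - y'‖)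
    (hg0 : g 0 = 0)
    (V : EuclideanSpace ℝ (Fin n) → ℝ)
    (hVlip : ∃ L : ℝ, 0 ≤ L ∧ ∀ y ∈ Ω, ∀ y' ∈ Ω, |V y - V y'| ≤ L * ‖y - y'‖)
    (hV0 : V 0 = 0)
    (a b₁ b₂ : ℝ) (ha : 0 < a) (hb₁ : 0 < b₁) (hb₂ : 0 < b₂)
    (hlow : ∀ y ∈ Ω, b₁ * ‖y‖ ^ a ≤ V y)
    (hdini : ∀ y ∈ interior Ω, y ≠ 0 →
      Filter.limsup (fun h : ℝ => (((V (y + h • g y) - V y) / h : ℝ) : EReal)) (𝓝[>] (0 : ℝ))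
        ≤ ((-b₂ * V y : ℝ) : EReal))
    (r : ℝ) (hr : 0 < r)
    (hA : {y | y ∈ Ω ∧ V y ≤ r} ⊆ interior Ω)
    -- a solution x : [t₀, T) → Ω of ẋ = g(x) starting in 𝒜
    (t₀ : ℝ) (T : EReal) (hT : (t₀ : EReal) < T)
    (x : ℝ → EuclideanSpace ℝ (Fin n))
    (hmem : ∀ t : ℝ, t₀ ≤ t → (t : EReal) < T → x t ∈ Ω)
    (hode : ∀ t : ℝ, t₀ ≤ t → (t : EReal) < T →
      HasDerivWithinAt x (g (x t)) {s : ℝ | t₀ ≤ s ∧ (s : EReal) < T} t)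
    (hinit : x t₀ ∈ Ω ∧ V (x t₀) ≤ r) :
    ∀ t : ℝ, t₀ ≤ t → (t : EReal) < T →
      (x t ∈ Ω ∧ V (x t) ≤ r) ∧
      ‖x t‖ ≤ (r / b₁) ^ (1 / a) * Real.exp (-(b₂ / a) * (t - t₀)) :=
  stmt7_general n Ω g V hVlip hV0 a b₁ b₂ ha hb₁ hb₂ hlow hdini r hr hA t₀ T x hmem hode hinit
end

section
/- Let Ω ⊂ ℝ^n be compact, g : Ω → ℝ^n Lipschitz continuous, V : Ω → ℝ Lipschitz continuous, and let a, b₁, b₂ > 0 and V_{∂𝒜} > 0 be constants. Let 𝒜 := {y ∈ Ω : V(y) ≤ V_{∂𝒜}} and suppose 𝒜 ⊆ Ω° and 0 ∈ 𝒜°. Let 𝒜₁ be compact with 0 ∈ 𝒜₁° and 𝒜₁ ⊆ 𝒜°. Assume b₁‖y‖^a ≤ V(y) for all y ∈ 𝒜, and that D⁺V(y) ≤ −b₂ V(y) for all y ∈ 𝒜 \ 𝒜₁°, where D⁺V(y) := limsup_{h→0⁺}(V(y + h·g(y)) − V(y))/h. Then for every continuous x : [t₀, T) → Ω that is differentiable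 with x'(t) = g(x(t)) for all t and satisfies x(t₀) ∈ 𝒜: (i) x(t) ∈ 𝒜 for all t ∈ [t₀, T), i.e., 𝒜 is positively invariant; (ii) if x(t₀) ∈ (𝒜 \ 𝒜₁)°, then ‖x(t)‖ ≤ (V_{∂𝒜}/b₁)^{1/a} · e^{−(b₂/a)(t − t₀)} holds for every t ∈ [t₀, T) such that x(s) ∈ 𝒜 \ 𝒜₁° for all s ∈ [t₀, t]; (iii) if moreover T = ∞ and x(t₀) ∈ (𝒜 \ 𝒜₁)°, then there exists a finite t₁ ≥ t₀ with x(t₁) ∈ ∂𝒜₁ (the state reaches the boundary of 𝒜₁ in finite time). -/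
/-!
The Lipschitz bound on `V` turns the Dini condition at `x t` into the same bound on the right
slopes of `V ∘ x`. Where `V ∘ x` touches the level `V_∂𝒜`, the trajectory is either in `𝒜₁°`,
hence locally inside `𝒜`, or `V ∘ x` is strictly decreasing to the right; so it never crosses
that level. Gronwall's inequality for `V ∘ x` gives `V (x t) ≤ V_∂𝒜 e^{-b₂ (t - t₀)}` while
the trajectory avoids `𝒜₁°`, and `b₁ ‖y‖^a ≤ V y` turns this into the norm estimate. A
trajectory that never met `∂𝒜₁` would, by connectedness of its time intervals, stay outside
`𝒜₁` forever, yet the norm estimate drives it into a ball around `0` contained in `𝒜₁`.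
-/

open Filter Topology Set Real
open scoped NNReal

/-- `D⁺V(y)` along `v`, taken in `EReal` so that an unbounded `limsup` is not a junk value. -/
noncomputable def upperDiniDeriv {E : Type*} [AddCommGroup E] [Module ℝ E] (V : E → ℝ) (y v : E) :
    EReal :=
  limsup (fun h : ℝ => (((V (y + h • v) - V y) / h : ℝ) : EReal)) (𝓝[>] 0)

theorem IsPreconnected.inter_frontier_nonempty {X : Type*} [TopologicalSpace X] {s S : Set X}
    (hs : IsPreconnected s) (hsS : (s ∩ S).Nonempty) (hsS' : (s \ S).Nonempty) :
    (s ∩ frontier S).Nonempty := by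
  by_contra! hfr
  have hsplit : s ⊆ interior S ∪ (closure S)ᶜ := fun y hy => by
    by_contra! hy'
    simp only [mem_union, mem_compl_iff, not_or, not_not] at hy'
    exact hfr.subset ⟨hy, hy'.2, hy'.1⟩
  obtain ⟨y, hys, hyS⟩ := hsS
  have hyint : y ∈ interior S := (hsplit hys).resolve_right (not_not.2 (subset_closure hyS))
  have hsint := hs.subset_left_of_subset_union isOpen_interior isClosed_closure.isOpen_compl
    interior_subset_closure.disjoint_compl_right hsplit ⟨y, hys, hyint⟩
  obtain ⟨z, hzs, hzS⟩ := hsS'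
  exact hzS (interior_subset (hsint hzs))

theorem image_le_of_forall_eq_eventually_le {f : ℝ → ℝ} {a b C : ℝ}
    (hf : ContinuousOn f (Icc a b)) (ha : f a ≤ C)
    (hC : ∀ u ∈ Ico a b, f u = C → ∀ᶠ z in 𝓝[>] u, f z ≤ C) :
    ∀ u ∈ Icc a b, f u ≤ C := by
  have hclosed : IsClosed ({u | f u ≤ C} ∩ Icc a b) := by
    rw [inter_comm]; exact hf.preimage_isClosed_of_isClosed isClosed_Icc isClosed_Iic
  refine IsClosed.Icc_subset_of_forall_mem_nhdsWithin hclosed ha fun u ⟨hu, hu'⟩ => ?_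
  rcases lt_or_eq_of_le (show f u ≤ C from hu) with hlt | heq
  · have hnear : ∀ᶠ z in 𝓝[Icc a b] u, f z < C :=
      hf u (Ico_subset_Icc_self hu') (Iio_mem_nhds hlt)
    exact Eventually.mono (nhdsWithin_le_of_mem (Icc_mem_nhdsGT_of_mem hu') hnear) fun _ => le_of_lt
  · exact hC u hu' heq

theorem le_of_mul_rpow_le_mul_exp {r a b M c s : ℝ} (hr : 0 ≤ r) (ha : 0 < a) (hb : 0 < b)
    (hM : 0 ≤ M) (h : b * r ^ a ≤ M * exp (-c * s)) :
    r ≤ (M / b) ^ (1 / a) * exp (-(c / a) * s) := by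
  have hra : r ^ a ≤ M / b * exp (-c * s) := by
    rw [div_mul_eq_mul_div, le_div_iff₀ hb]; linarith
  calc r = (r ^ a) ^ (1 / a) := by rw [← rpow_mul hr, mul_one_div_cancel ha.ne', rpow_one]
    _ ≤ (M / b * exp (-c * s)) ^ (1 / a) := by gcongr
    _ = (M / b) ^ (1 / a) * exp (-(c / a) * s) := by
      rw [mul_rpow (by positivity) (exp_nonneg _), ← exp_mul]
      congr 2; ring

theorem tendsto_mul_exp_neg_mul_sub_atTop {c : ℝ} (hc : 0 < c) (M t₀ : ℝ) :
    Tendsto (fun t => M * exp (-c * (t - t₀))) atTop (𝓝 0) := by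
  have hlin : Tendsto (fun t => -c * (t - t₀)) atTop atBot :=
    (tendsto_atTop_add_const_right _ (-t₀) tendsto_id).const_mul_atTop_of_neg (neg_lt_zero.2 hc)
  simpa using (tendsto_exp_atBot.comp hlin).const_mul M

variable {E : Type*} [NormedAddCommGroup E]

theorem exists_mem_frontier_of_norm_le {x : ℝ → E} {S : Set E} {t₀ : ℝ} {φ : ℝ → ℝ}
    (hx : ContinuousOn x (Ici t₀)) (hS : (0 : E) ∈ interior S) (hx₀ : x t₀ ∉ S)
    (hφ : Tendsto φ atTop (𝓝 0))
    (hbound : ∀ t, t₀ ≤ t → (∀ s ∈ Icc t₀ t, x s ∉ interior S) → ‖x t‖ ≤ φ t) :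
    ∃ t₁, t₀ ≤ t₁ ∧ x t₁ ∈ frontier S := by
  by_contra! hfr
  have hout : ∀ t, t₀ ≤ t → x t ∉ S := by
    intro t ht hxt
    obtain ⟨_, ⟨u, hu, rfl⟩, hu'⟩ :=
      (isPreconnected_Icc.image x (hx.mono Icc_subset_Ici_self)).inter_frontier_nonempty
        ⟨x t, mem_image_of_mem x ⟨ht, le_rfl⟩, hxt⟩ ⟨x t₀, mem_image_of_mem x ⟨le_rfl, ht⟩, hx₀⟩
    exact hfr u hu.1 hu'
  obtain ⟨ε, hε, hball⟩ := Metric.mem_nhds_iff.1 (mem_interior_iff_mem_nhds.1 hS)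
  obtain ⟨t, ht, hφt⟩ := ((eventually_ge_atTop t₀).and (hφ.eventually (gt_mem_nhds hε))).exists
  have hnorm : ‖x t‖ < ε := (hbound t ht fun s hs h => hout s hs.1 (interior_subset h)).trans_lt hφt
  exact hout t ht (hball (mem_ball_zero_iff.2 hnorm))

variable [NormedSpace ℝ E]

theorem eventually_slope_comp_lt_of_upperDiniDeriv_lt {V : E → ℝ} {Ω : Set E} {K : ℝ≥0}
    (hV : LipschitzOnWith K V Ω) {x : ℝ → E} {v : E} {t r : ℝ}
    (hx : HasDerivWithinAt x v (Ioi t) t) (hxt : x t ∈ interior Ω)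
    (hr : upperDiniDeriv V (x t) v < r) :
    ∀ᶠ z in 𝓝[>] t, slope (V ∘ x) t z < r := by
  obtain ⟨r', hDr', hr'r⟩ := EReal.lt_iff_exists_real_btwn.1 hr
  rw [EReal.coe_lt_coe_iff] at hr'r
  set y := x t
  have hshift : Tendsto (fun z => z - t) (𝓝[>] t) (𝓝[>] 0) := by
    refine tendsto_nhdsWithin_of_tendsto_nhds_of_eventually_within _ ?_ ?_
    · exact tendsto_nhdsWithin_of_tendsto_nhds (by simpa using (continuous_sub_right t).tendsto t)
    · filter_upwards [self_mem_nhdsWithin] with z hz using sub_pos.2 (mem_Ioi.1 hz)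
  have hray : ∀ᶠ z in 𝓝[>] t, (V (y + (z - t) • v) - V y) / (z - t) < r' :=
    hshift.eventually ((eventually_lt_of_limsup_lt hDr').mono fun _ h => EReal.coe_lt_coe_iff.1 h)
  have hΩ : Ω ∈ 𝓝 y := mem_of_superset (isOpen_interior.mem_nhds hxt) interior_subset
  have hrayΩ : ∀ᶠ z in 𝓝[>] t, y + (z - t) • v ∈ Ω := by
    have hcont : Tendsto (fun z : ℝ => y + (z - t) • v) (𝓝 t) (𝓝 y) :=
      Continuous.tendsto' (by fun_prop) t y (by simp)
    exact (hcont.mono_left nhdsWithin_le_nhds).eventually hΩ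
  have hxΩ : ∀ᶠ z in 𝓝[>] t, x z ∈ Ω := hx.continuousWithinAt.eventually hΩ
  set ε := (r - r') / (K + 1)
  have hε : 0 < ε := div_pos (sub_pos.2 hr'r) (by positivity)
  have hKε : K * ε ≤ r - r' := by
    rw [mul_div_assoc', div_le_iff₀ (by positivity)]; nlinarith
  have hlin : ∀ᶠ z in 𝓝[>] t, ‖x z - y - (z - t) • v‖ ≤ ε * ‖z - t‖ :=
    (hasDerivWithinAt_iff_isLittleO.1 hx).def hε
  filter_upwards [hray, hrayΩ, hxΩ, hlin, self_mem_nhdsWithin] with z hray hrayΩ hxΩ hlin hz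
  have hzt : 0 < z - t := sub_pos.2 (mem_Ioi.1 hz)
  rw [Real.norm_of_nonneg hzt.le] at hlin
  rw [div_lt_iff₀ hzt] at hray
  -- compare `x z` with the point `y + (z - t) • v` of the ray, where the Dini bound applies
  have hV' : V (x z) - V (y + (z - t) • v) ≤ K * (ε * (z - t)) := by
    calc V (x z) - V (y + (z - t) • v) ≤ K * dist (x z) (y + (z - t) • v) :=
          (le_abs_self _).trans (hV.dist_le_mul _ hxΩ _ hrayΩ)
      _ ≤ K * (ε * (z - t)) := by
          rw [dist_eq_norm, ← sub_sub]; exact mul_le_mul_of_nonneg_left hlin K.2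
  rw [slope_def_field, div_lt_iff₀ hzt]
  simp only [Function.comp_apply]
  nlinarith [mul_le_mul_of_nonneg_right hKε hzt.le]

theorem comp_le_mul_exp_of_upperDiniDeriv_le {V : E → ℝ} {Ω : Set E} {K : ℝ≥0}
    (hV : LipschitzOnWith K V Ω) {g : E → E} {x : ℝ → E} {a b c : ℝ}
    (hx : ∀ u ∈ Icc a b, HasDerivWithinAt x (g (x u)) (Icc a b) u)
    (hxΩ : ∀ u ∈ Icc a b, x u ∈ interior Ω)
    (hD : ∀ u ∈ Ico a b, upperDiniDeriv V (x u) (g (x u)) ≤ ((-c * V (x u) : ℝ) : EReal)) :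
    ∀ t ∈ Icc a b, V (x t) ≤ V (x a) * exp (-c * (t - a)) := by
  have hf : ContinuousOn (V ∘ x) (Icc a b) :=
    hV.continuousOn.comp (fun u hu => (hx u hu).continuousWithinAt)
      fun u hu => interior_subset (hxΩ u hu)
  have hslope : ∀ u ∈ Ico a b, ∀ r, -c * V (x u) < r →
      ∃ᶠ z in 𝓝[>] u, (z - u)⁻¹ * (V (x z) - V (x u)) < r := by
    intro u hu r hr
    have hxu := (hx u (Ico_subset_Icc_self hu)).mono_of_mem_nhdsWithin (Icc_mem_nhdsGT_of_mem hu)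
    refine (eventually_slope_comp_lt_of_upperDiniDeriv_lt hV hxu (hxΩ u (Ico_subset_Icc_self hu))
      ((hD u hu).trans_lt (EReal.coe_lt_coe_iff.2 hr))).frequently.mono fun z hz => ?_
    rwa [slope_def_field, div_eq_inv_mul] at hz
  intro t ht
  simpa only [gronwallBound_ε0, Function.comp_apply] using
    le_gronwallBound_of_liminf_deriv_right_le hf hslope le_rfl (fun u _ => (add_zero _).ge) t ht

theorem mem_sublevel_of_upperDiniDeriv_le {V : E → ℝ} {Ω : Set E} {K : ℝ≥0}
    (hV : LipschitzOnWith K V Ω) {A A₁ : Set E} {C c : ℝ} (hA : A = {y | y ∈ Ω ∧ V y ≤ C})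
    (hAΩ : A ⊆ interior Ω) (hA₁ : A₁ ⊆ interior A) (hC : 0 < C) (hc : 0 < c) {g : E → E}
    (hD : ∀ y ∈ A \ interior A₁, upperDiniDeriv V y (g y) ≤ ((-c * V y : ℝ) : EReal))
    {x : ℝ → E} {a b : ℝ} (hx : ∀ u ∈ Icc a b, HasDerivWithinAt x (g (x u)) (Icc a b) u)
    (hxΩ : ∀ u ∈ Icc a b, x u ∈ Ω) (ha : x a ∈ A) :
    ∀ t ∈ Icc a b, x t ∈ A := by
  subst hA
  have hf : ContinuousOn (V ∘ x) (Icc a b) :=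
    hV.continuousOn.comp (fun u hu => (hx u hu).continuousWithinAt) hxΩ
  suffices hle : ∀ t ∈ Icc a b, V (x t) ≤ C from fun t ht => ⟨hxΩ t ht, hle t ht⟩
  refine image_le_of_forall_eq_eventually_le hf ha.2 fun u hu hVu => ?_
  have hxu := (hx u (Ico_subset_Icc_self hu)).mono_of_mem_nhdsWithin (Icc_mem_nhdsGT_of_mem hu)
  have hxuA : x u ∈ {y | y ∈ Ω ∧ V y ≤ C} := ⟨hxΩ u (Ico_subset_Icc_self hu), hVu.le⟩
  by_cases hint : x u ∈ interior A₁
  · filter_upwards [hxu.continuousWithinAt.eventually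
      (isOpen_interior.mem_nhds (hA₁ (interior_subset hint)))] with z hz
    exact (interior_subset hz).2
  · have hneg : upperDiniDeriv V (x u) (g (x u)) < ((0 : ℝ) : EReal) :=
      (hD _ ⟨hxuA, hint⟩).trans_lt (EReal.coe_lt_coe_iff.2 (by rw [hVu]; nlinarith))
    filter_upwards [eventually_slope_comp_lt_of_upperDiniDeriv_lt hV hxu (hAΩ hxuA) hneg,
      self_mem_nhdsWithin] with z hz hzu
    rw [slope_def_field, div_lt_iff₀ (sub_pos.2 (mem_Ioi.1 hzu)), zero_mul, sub_neg] at hz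
    exact (hz.trans_eq hVu).le

theorem stmt8_general (n : ℕ)
    (Ω : Set (EuclideanSpace ℝ (Fin n)))
    (g : EuclideanSpace ℝ (Fin n) → EuclideanSpace ℝ (Fin n))
    (V : EuclideanSpace ℝ (Fin n) → ℝ)
    (hVlip : ∃ L : ℝ, 0 ≤ L ∧ ∀ y ∈ Ω, ∀ y' ∈ Ω, |V y - V y'| ≤ L * ‖y - y'‖)
    (a b₁ b₂ VA : ℝ) (ha : 0 < a) (hb₁ : 0 < b₁) (hb₂ : 0 < b₂) (hVA : 0 < VA)
    (A : Set (EuclideanSpace ℝ (Fin n))) (hAdef : A = {y | y ∈ Ω ∧ V y ≤ VA})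
    (hAsub : A ⊆ interior Ω)
    (A₁ : Set (EuclideanSpace ℝ (Fin n)))
    (h0A₁ : (0 : EuclideanSpace ℝ (Fin n)) ∈ interior A₁)
    (hA₁A : A₁ ⊆ interior A)
    (hlow : ∀ y ∈ A, b₁ * ‖y‖ ^ a ≤ V y)
    (hdini : ∀ y ∈ A \ interior A₁,
      Filter.limsup (fun h : ℝ => (((V (y + h • g y) - V y) / h : ℝ) : EReal)) (𝓝[>] (0 : ℝ))
        ≤ ((-b₂ * V y : ℝ) : EReal))
    -- a solution x : [t₀, T) → Ω of ẋ = g(x) starting in 𝒜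
    (t₀ : ℝ) (T : EReal)
    (x : ℝ → EuclideanSpace ℝ (Fin n))
    (hmem : ∀ t : ℝ, t₀ ≤ t → (t : EReal) < T → x t ∈ Ω)
    (hode : ∀ t : ℝ, t₀ ≤ t → (t : EReal) < T →
      HasDerivWithinAt x (g (x t)) {s : ℝ | t₀ ≤ s ∧ (s : EReal) < T} t)
    (hinit : x t₀ ∈ A) :
    -- (i) positive invariance of 𝒜
    (∀ t : ℝ, t₀ ≤ t → (t : EReal) < T → x t ∈ A) ∧
    -- (ii) exponential decay of the state norm while in 𝒜 \ 𝒜₁°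
    (x t₀ ∈ interior (A \ A₁) →
      ∀ t : ℝ, t₀ ≤ t → (t : EReal) < T →
        (∀ s : ℝ, t₀ ≤ s → s ≤ t → x s ∈ A \ interior A₁) →
        ‖x t‖ ≤ (VA / b₁) ^ (1 / a) * Real.exp (-(b₂ / a) * (t - t₀))) ∧
    -- (iii) the boundary of 𝒜₁ is reached in finite time
    (T = ⊤ → x t₀ ∈ interior (A \ A₁) →
      ∃ t₁ : ℝ, t₀ ≤ t₁ ∧ x t₁ ∈ frontier A₁) := by
  obtain ⟨L, -, hL⟩ := hVlip
  have hV : LipschitzOnWith L.toNNReal V Ω := LipschitzOnWith.of_dist_le' fun y hy y' hy' => by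
    rw [Real.dist_eq, dist_eq_norm]; exact hL y hy y' hy'
  have hIcc : ∀ t : ℝ, (t : EReal) < T → Icc t₀ t ⊆ {s : ℝ | t₀ ≤ s ∧ (s : EReal) < T} :=
    fun t ht s hs => ⟨hs.1, (EReal.coe_le_coe_iff.2 hs.2).trans_lt ht⟩
  have hsol : ∀ t : ℝ, (t : EReal) < T →
      ∀ u ∈ Icc t₀ t, HasDerivWithinAt x (g (x u)) (Icc t₀ t) u :=
    fun t ht u hu => (hode u (hIcc t ht hu).1 (hIcc t ht hu).2).mono (hIcc t ht)
  have hinv : ∀ t : ℝ, t₀ ≤ t → (t : EReal) < T → x t ∈ A := fun t ht hT =>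
    mem_sublevel_of_upperDiniDeriv_le hV hAdef hAsub hA₁A hVA hb₂ hdini (hsol t hT)
      (fun u hu => hmem u (hIcc t hT hu).1 (hIcc t hT hu).2) hinit t ⟨ht, le_rfl⟩
  have hdecay : ∀ t : ℝ, t₀ ≤ t → (t : EReal) < T →
      (∀ s : ℝ, t₀ ≤ s → s ≤ t → x s ∈ A \ interior A₁) →
      ‖x t‖ ≤ (VA / b₁) ^ (1 / a) * Real.exp (-(b₂ / a) * (t - t₀)) := by
    intro t ht hT hpath
    have hVx₀ : V (x t₀) ≤ VA := by rw [hAdef] at hinit; exact hinit.2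
    refine le_of_mul_rpow_le_mul_exp (norm_nonneg _) ha hb₁ hVA.le ?_
    calc b₁ * ‖x t‖ ^ a ≤ V (x t) := hlow _ (hpath t ht le_rfl).1
      _ ≤ V (x t₀) * exp (-b₂ * (t - t₀)) :=
        comp_le_mul_exp_of_upperDiniDeriv_le hV (hsol t hT)
          (fun u hu => hAsub (hpath u hu.1 hu.2).1)
          (fun u hu => hdini _ (hpath u hu.1 hu.2.le)) t ⟨ht, le_rfl⟩
      _ ≤ VA * exp (-b₂ * (t - t₀)) := by gcongr
  refine ⟨hinv, fun _ => hdecay, ?_⟩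
  rintro rfl hstart
  refine exists_mem_frontier_of_norm_le
    (fun t ht => (hode t ht (EReal.coe_lt_top t)).continuousWithinAt.mono
      fun s hs => ⟨hs, EReal.coe_lt_top s⟩)
    h0A₁ (interior_subset hstart).2 (tendsto_mul_exp_neg_mul_sub_atTop (div_pos hb₂ ha) _ t₀)
    fun t ht hout => hdecay t ht (EReal.coe_lt_top t) fun s hs hst =>
      ⟨hinv s hs (EReal.coe_lt_top s), hout s ⟨hs, hst⟩⟩

/-- barrier-function lemma: the sublevel set `𝒜 = {y ∈ Ω : V(y) ≤ V_∂𝒜}`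
is positively invariant; while the trajectory stays in `𝒜 \ 𝒜₁°` the state norm decays
exponentially; and (for `T = ∞`) starting in `(𝒜 \ 𝒜₁)°` the state reaches `∂𝒜₁`
in finite time.  (`T ≤ ∞` is encoded as `T : EReal`.) -/
theorem stmt8 (n : ℕ)
    (Ω : Set (EuclideanSpace ℝ (Fin n))) (hΩc : IsCompact Ω)
    (g : EuclideanSpace ℝ (Fin n) → EuclideanSpace ℝ (Fin n))
    (hg : ∃ L : ℝ, 0 ≤ L ∧ ∀ y ∈ Ω, ∀ y' ∈ Ω, ‖g y - g y'‖ ≤ L * ‖y - y'‖)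
    (V : EuclideanSpace ℝ (Fin n) → ℝ)
    (hVlip : ∃ L : ℝ, 0 ≤ L ∧ ∀ y ∈ Ω, ∀ y' ∈ Ω, |V y - V y'| ≤ L * ‖y - y'‖)
    (a b₁ b₂ VA : ℝ) (ha : 0 < a) (hb₁ : 0 < b₁) (hb₂ : 0 < b₂) (hVA : 0 < VA)
    (A : Set (EuclideanSpace ℝ (Fin n))) (hAdef : A = {y | y ∈ Ω ∧ V y ≤ VA})
    (hAsub : A ⊆ interior Ω)
    (h0A : (0 : EuclideanSpace ℝ (Fin n)) ∈ interior A)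
    (A₁ : Set (EuclideanSpace ℝ (Fin n))) (hA₁c : IsCompact A₁)
    (h0A₁ : (0 : EuclideanSpace ℝ (Fin n)) ∈ interior A₁)
    (hA₁A : A₁ ⊆ interior A)
    (hlow : ∀ y ∈ A, b₁ * ‖y‖ ^ a ≤ V y)
    (hdini : ∀ y ∈ A \ interior A₁,
      Filter.limsup (fun h : ℝ => (((V (y + h • g y) - V y) / h : ℝ) : EReal)) (𝓝[>] (0 : ℝ))
        ≤ ((-b₂ * V y : ℝ) : EReal))
    -- a solution x : [t₀, T) → Ω of ẋ = g(x) starting in 𝒜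
    (t₀ : ℝ) (T : EReal) (hT : (t₀ : EReal) < T)
    (x : ℝ → EuclideanSpace ℝ (Fin n))
    (hmem : ∀ t : ℝ, t₀ ≤ t → (t : EReal) < T → x t ∈ Ω)
    (hode : ∀ t : ℝ, t₀ ≤ t → (t : EReal) < T →
      HasDerivWithinAt x (g (x t)) {s : ℝ | t₀ ≤ s ∧ (s : EReal) < T} t)
    (hinit : x t₀ ∈ A) :
    -- (i) positive invariance of 𝒜
    (∀ t : ℝ, t₀ ≤ t → (t : EReal) < T → x t ∈ A) ∧
    -- (ii) exponential decay of the state norm while in 𝒜 \ 𝒜₁°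
    (x t₀ ∈ interior (A \ A₁) →
      ∀ t : ℝ, t₀ ≤ t → (t : EReal) < T →
        (∀ s : ℝ, t₀ ≤ s → s ≤ t → x s ∈ A \ interior A₁) →
        ‖x t‖ ≤ (VA / b₁) ^ (1 / a) * Real.exp (-(b₂ / a) * (t - t₀))) ∧
    -- (iii) the boundary of 𝒜₁ is reached in finite time
    (T = ⊤ → x t₀ ∈ interior (A \ A₁) →
      ∃ t₁ : ℝ, t₀ ≤ t₁ ∧ x t₁ ∈ frontier A₁) :=
  stmt8_general n Ω g V hVlip a b₁ b₂ VA ha hb₁ hb₂ hVA A hAdef hAsub A₁ h0A₁ hA₁A hlow hdini t₀ T x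
    hmem hode hinit
end

section
/- Let a, p, q ∈ ℝ and v, w ∈ ℝ^n, and let M be the symmetric (2n+3)×(2n+3) real matrix M = [[a, vᵀ, wᵀ, p, q], [v, −2I_n, 0, 0, 0], [w, 0, −2I_n, 0, 0], [p, 0, 0, −2, 0], [q, 0, 0, 0, −2]] (block form, zeros denoting zero blocks of the appropriate sizes). If M is negative semidefinite, then a + vᵀw + p·q ≤ 0. -/
open Filter Topology Set Matrix
open scoped BigOperators

/-- The symmetric block matrix
`M = [[a, vᵀ, wᵀ, p, q], [v, −2Iₙ, 0, 0, 0], [w, 0, −2Iₙ, 0, 0], [p, 0, 0, −2, 0], [q, 0, 0, 0, −2]]`. -/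
def blockM (n : ℕ) (a : ℝ) (v w : Fin n → ℝ) (p q : ℝ) :
    Matrix (Unit ⊕ Fin n ⊕ Fin n ⊕ Unit ⊕ Unit) (Unit ⊕ Fin n ⊕ Fin n ⊕ Unit ⊕ Unit) ℝ :=
  fun i j =>
    match i, j with
    | Sum.inl _, Sum.inl _ => a
    | Sum.inl _, Sum.inr (Sum.inl k) => v k
    | Sum.inl _, Sum.inr (Sum.inr (Sum.inl k)) => w k
    | Sum.inl _, Sum.inr (Sum.inr (Sum.inr (Sum.inl _))) => p
    | Sum.inl _, Sum.inr (Sum.inr (Sum.inr (Sum.inr _))) => q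
    | Sum.inr (Sum.inl k), Sum.inl _ => v k
    | Sum.inr (Sum.inr (Sum.inl k)), Sum.inl _ => w k
    | Sum.inr (Sum.inr (Sum.inr (Sum.inl _))), Sum.inl _ => p
    | Sum.inr (Sum.inr (Sum.inr (Sum.inr _))), Sum.inl _ => q
    | Sum.inr (Sum.inl k), Sum.inr (Sum.inl k') => if k = k' then -2 else 0
    | Sum.inr (Sum.inr (Sum.inl k)), Sum.inr (Sum.inr (Sum.inl k')) =>
        if k = k' then -2 else 0
    | Sum.inr (Sum.inr (Sum.inr (Sum.inl _))), Sum.inr (Sum.inr (Sum.inr (Sum.inl _))) => -2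
    | Sum.inr (Sum.inr (Sum.inr (Sum.inr _))), Sum.inr (Sum.inr (Sum.inr (Sum.inr _))) => -2
    | _, _ => 0

/-- if the block matrix `M` is negative semidefinite,
then `a + vᵀw + p·q ≤ 0`. -/
theorem stmt10 (n : ℕ) (a p q : ℝ) (v w : Fin n → ℝ)
    (hM : ∀ zv : (Unit ⊕ Fin n ⊕ Fin n ⊕ Unit ⊕ Unit) → ℝ,
      zv ⬝ᵥ (blockM n a v w p q) *ᵥ zv ≤ 0) :
    a + (∑ i, v i * w i) + p * q ≤ 0 := by
  have key := hM (fun i => match i with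
    | Sum.inl _ => 1
    | Sum.inr (Sum.inl k) => v k / 2
    | Sum.inr (Sum.inr (Sum.inl k)) => w k / 2
    | Sum.inr (Sum.inr (Sum.inr (Sum.inl _))) => p / 2
    | Sum.inr (Sum.inr (Sum.inr (Sum.inr _))) => q / 2)
  simp only [dotProduct, mulVec, blockM, Fintype.sum_sum_type] at key
  simp only [Finset.univ_unique, PUnit.default_eq_unit, Finset.sum_const, Finset.card_singleton, one_smul, smul_eq_mul] at key
  simp only [ite_mul, Finset.sum_ite_eq, Finset.mem_univ, if_true, zero_mul, mul_zero,
    Finset.sum_const_zero, add_zero, zero_add, one_mul, mul_one] at key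
  have hvw : ∑ i, v i * w i ≤ ∑ x, v x * (v x / 2) + ∑ x, w x * (w x / 2) := by
    rw [← Finset.sum_add_distrib]
    apply Finset.sum_le_sum
    intro i _
    nlinarith [sq_nonneg (v i - w i)]
  have hz : ∑ x : Fin n, v x / 2 * (v x + -2 * (v x / 2)) = 0 := by
    apply Finset.sum_eq_zero; intro i _; ring
  have hz2 : ∑ x : Fin n, w x / 2 * (w x + -2 * (w x / 2)) = 0 := by
    apply Finset.sum_eq_zero; intro i _; ring
  nlinarith [key, hvw, sq_nonneg (p - q)]
end
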